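/- arXiv:2206.08810 — 6 statements merged into one kernel-verified Lean document; each statement's English description precedes it below -/
import Mathlib

section
/- Let n ≥ 1, W a linear subspace of ℝⁿ, d, c ∈ ℝⁿ, and 0 < μ' ≤ μ. Suppose (x, s) is a central path point at parameter μ and (x', s') is a central path point at parameter μ'. Then ∑_{i=1}^n (x'_i/x_i + s'_i/s_i) ≤ 2n, i.e., ‖x'/x + s'/s‖₁ ≤ 2n (quotients of vectors taken entrywise). -/
/-!
Since `x - x' ∈ W` and `s - s' ∈ Wᗮ`, we have `⟪x - x', s - s'⟫ = 0`, which expands to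
`∑ (x'ᵢ sᵢ + xᵢ s'ᵢ) = ∑ xᵢ sᵢ + ∑ x'ᵢ s'ᵢ = n μ + n μ'`. Dividing the `i`-th term by
`xᵢ sᵢ = μ` turns the left side into the sum in question, so it equals `n (1 + μ'/μ) ≤ 2n`.
-/

open scoped RealInnerProductSpace

section AffineComplementary

variable {E : Type*} [NormedAddCommGroup E] [InnerProductSpace ℝ E]
  {W : Submodule ℝ E} {d c x s x' s' : E}

theorem inner_sub_sub_eq_zero_of_sub_mem (hxW : x - d ∈ W) (hxW' : x' - d ∈ W)
    (hsW : s - c ∈ Wᗮ) (hsW' : s' - c ∈ Wᗮ) : ⟪x - x', s - s'⟫ = 0 := by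
  have hx : x - x' ∈ W := by simpa using W.sub_mem hxW hxW'
  have hs : s - s' ∈ Wᗮ := by simpa using Wᗮ.sub_mem hsW hsW'
  exact Submodule.inner_right_of_mem_orthogonal hx hs

theorem inner_add_inner_eq_of_sub_mem (hxW : x - d ∈ W) (hxW' : x' - d ∈ W)
    (hsW : s - c ∈ Wᗮ) (hsW' : s' - c ∈ Wᗮ) :
    ⟪x', s⟫ + ⟪x, s'⟫ = ⟪x, s⟫ + ⟪x', s'⟫ := by
  have h := inner_sub_sub_eq_zero_of_sub_mem hxW hxW' hsW hsW'
  simp only [inner_sub_left, inner_sub_right] at h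
  linarith

end AffineComplementary

theorem EuclideanSpace.sum_cross_mul_eq_of_sub_mem {ι : Type*} [Fintype ι]
    {W : Submodule ℝ (EuclideanSpace ℝ ι)} {d c x s x' s' : EuclideanSpace ℝ ι}
    (hxW : x - d ∈ W) (hxW' : x' - d ∈ W) (hsW : s - c ∈ Wᗮ) (hsW' : s' - c ∈ Wᗮ) :
    ∑ i, (x' i * s i + x i * s' i) = ∑ i, x i * s i + ∑ i, x' i * s' i := by
  have h := inner_add_inner_eq_of_sub_mem hxW hxW' hsW hsW'
  simp only [PiLp.inner_apply, RCLike.inner_apply, conj_trivial] at h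
  rw [Finset.sum_add_distrib]
  simpa only [mul_comm] using h

theorem div_add_div_eq_of_mul_eq {a b a' b' μ : ℝ} (ha : a ≠ 0) (hb : b ≠ 0)
    (hab : a * b = μ) : a' / a + b' / b = (a' * b + a * b') / μ := by
  rw [← hab]
  field_simp

theorem statement2_general (n : ℕ)
    (W : Submodule ℝ (EuclideanSpace ℝ (Fin n)))
    (d c : EuclideanSpace ℝ (Fin n))
    (μ μ' : ℝ) (hμ'pos : 0 < μ') (hμ'μ : μ' ≤ μ)
    (x s x' s' : EuclideanSpace ℝ (Fin n))
    (hxW : x - d ∈ W) (hsW : s - c ∈ Wᗮ)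
    (hxpos : ∀ i, 0 < x i) (hspos : ∀ i, 0 < s i)
    (hxs : ∀ i, x i * s i = μ)
    (hxW' : x' - d ∈ W) (hsW' : s' - c ∈ Wᗮ)
    (hxs' : ∀ i, x' i * s' i = μ') :
    ∑ i, (x' i / x i + s' i / s i) ≤ 2 * n := by
  have hμ : 0 < μ := hμ'pos.trans_le hμ'μ
  have hcross : ∑ i, (x' i * s i + x i * s' i) = n * μ + n * μ' := by
    simp [EuclideanSpace.sum_cross_mul_eq_of_sub_mem hxW hxW' hsW hsW', hxs, hxs']
  calc ∑ i, (x' i / x i + s' i / s i)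
      = (∑ i, (x' i * s i + x i * s' i)) / μ := by
        rw [Finset.sum_div]
        exact Finset.sum_congr rfl fun i _ ↦
          div_add_div_eq_of_mul_eq (hxpos i).ne' (hspos i).ne' (hxs i)
    _ = n * (1 + μ' / μ) := by rw [hcross]; field_simp
    _ ≤ 2 * n := by
        rw [mul_comm 2]
        gcongr
        linarith [(div_le_one hμ).mpr hμ'μ]

theorem statement2 (n : ℕ) (hn : 1 ≤ n)
    (W : Submodule ℝ (EuclideanSpace ℝ (Fin n)))
    (d c : EuclideanSpace ℝ (Fin n))
    (μ μ' : ℝ) (hμ'pos : 0 < μ') (hμ'μ : μ' ≤ μ)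
    (x s x' s' : EuclideanSpace ℝ (Fin n))
    (hxW : x - d ∈ W) (hsW : s - c ∈ Wᗮ)
    (hxpos : ∀ i, 0 < x i) (hspos : ∀ i, 0 < s i)
    (hxs : ∀ i, x i * s i = μ)
    (hxW' : x' - d ∈ W) (hsW' : s' - c ∈ Wᗮ)
    (hxpos' : ∀ i, 0 < x' i) (hspos' : ∀ i, 0 < s' i)
    (hxs' : ∀ i, x' i * s' i = μ') :
    ∑ i, (x' i / x i + s' i / s i) ≤ 2 * n :=
  statement2_general n W d c μ μ' hμ'pos hμ'μ x s x' s' hxW hsW hxpos hspos hxs hxW' hsW' hxs'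
end

section
/- Let n ≥ 1, W a linear subspace of ℝⁿ, d, c ∈ ℝⁿ, and θ ∈ [0,1). Suppose x̄ ∈ W + d, s̄ ∈ W⊥ + c, x̄ > 0, s̄ > 0, and x̄_i s̄_i ≥ (1 − θ)·μ for all i ∈ [n], where μ = ⟨x̄, s̄⟩/n. If (x, s) is a central path point at parameter μ, then for every i ∈ [n]: (1/(2n))·x̄_i ≤ x_i ≤ (2n/(1 − θ))·x̄_i and (1/(2n))·s̄_i ≤ s_i ≤ (2n/(1 − θ))·s̄_i. -/
open scoped RealInnerProductSpace

/-!
The differences `x - x̄ ∈ W` and `s - s̄ ∈ Wᗮ` are orthogonal, so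
`⟪x, s̄⟫ + ⟪x̄, s⟫ = ⟪x, s⟫ + ⟪x̄, s̄⟫ = 2nμ`. All four vectors are positive, so every term
`x_i s̄_i` and `x̄_i s_i` of the left-hand side is at most `2nμ`. Comparing `x̄_i s_i ≤ 2nμ` with
`x_i s_i = μ` gives the lower bound on `x_i`, and comparing `x_i s̄_i ≤ 2nμ` with
`x̄_i s̄_i ≥ (1 - θ)μ` gives the upper bound; the bounds on `s_i` are the same with the roles of
`x` and `s` exchanged.
-/

theorem inner_add_inner_eq_of_sub_mem_orthogonal {E : Type*} [NormedAddCommGroup E]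
    [InnerProductSpace ℝ E] {K : Submodule ℝ E} {x x' s s' : E}
    (hx : x - x' ∈ K) (hs : s - s' ∈ Kᗮ) :
    ⟪x, s'⟫ + ⟪x', s⟫ = ⟪x, s⟫ + ⟪x', s'⟫ := by
  have h := K.inner_right_of_mem_orthogonal hx hs
  rw [inner_sub_left, inner_sub_right, inner_sub_right] at h
  linarith

namespace EuclideanSpace

variable {ι : Type*} [Fintype ι]

theorem real_inner_eq_sum (x y : EuclideanSpace ℝ ι) : ⟪x, y⟫ = ∑ i, x i * y i := by
  simp [PiLp.inner_apply, mul_comm]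

theorem real_inner_eq_card_mul {x y : EuclideanSpace ℝ ι} {μ : ℝ} (h : ∀ i, x i * y i = μ) :
    ⟪x, y⟫ = Fintype.card ι * μ := by
  simp [real_inner_eq_sum, h]

theorem mul_le_real_inner {x y : EuclideanSpace ℝ ι} (hx : ∀ i, 0 ≤ x i) (hy : ∀ i, 0 ≤ y i)
    (i : ι) : x i * y i ≤ ⟪x, y⟫ := by
  rw [real_inner_eq_sum]
  exact Finset.single_le_sum (f := fun j => x j * y j) (fun j _ => mul_nonneg (hx j) (hy j))
    (Finset.mem_univ i)

theorem mul_add_mul_le_of_sub_mem_orthogonal {K : Submodule ℝ (EuclideanSpace ℝ ι)}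
    {x x' s s' : EuclideanSpace ℝ ι} (hx : ∀ i, 0 ≤ x i) (hx' : ∀ i, 0 ≤ x' i)
    (hs : ∀ i, 0 ≤ s i) (hs' : ∀ i, 0 ≤ s' i) (hxK : x - x' ∈ K) (hsK : s - s' ∈ Kᗮ) (i : ι) :
    x i * s' i + x' i * s i ≤ ⟪x, s⟫ + ⟪x', s'⟫ := by
  rw [← inner_add_inner_eq_of_sub_mem_orthogonal hxK hsK]
  exact add_le_add (mul_le_real_inner hx hs' i) (mul_le_real_inner hx' hs i)

end EuclideanSpace

theorem bounds_of_mul_add_mul_le {N μ θ a a' b b' : ℝ} (hN : 0 < N) (ha : 0 < a) (ha' : 0 < a')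
    (hb : 0 < b) (hb' : 0 < b') (hθ : θ < 1) (hab : a * b = μ) (hw : (1 - θ) * μ ≤ a' * b')
    (hcross : a * b' + a' * b ≤ N * μ) :
    1 / N * a' ≤ a ∧ a ≤ N / (1 - θ) * a' := by
  have hθ' : 0 < 1 - θ := by linarith
  constructor
  · rw [one_div_mul_eq_div, div_le_iff₀ hN]
    nlinarith [mul_pos ha hb', mul_pos ha' hb]
  · rw [div_mul_eq_mul_div, le_div_iff₀ hθ']
    nlinarith [mul_pos ha hb', mul_pos ha' hb]

theorem statement3_general (n : ℕ)
    (W : Submodule ℝ (EuclideanSpace ℝ (Fin n)))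
    (d c : EuclideanSpace ℝ (Fin n))
    (θ : ℝ) (hθ1 : θ < 1)
    (xb sb x s : EuclideanSpace ℝ (Fin n))
    (hxb : xb - d ∈ W) (hsb : sb - c ∈ Wᗮ)
    (hxbpos : ∀ i, 0 < xb i) (hsbpos : ∀ i, 0 < sb i)
    (hwide : ∀ i, (1 - θ) * (⟪xb, sb⟫ / n) ≤ xb i * sb i)
    (hxW : x - d ∈ W) (hsW : s - c ∈ Wᗮ)
    (hxpos : ∀ i, 0 < x i) (hspos : ∀ i, 0 < s i)
    (hxs : ∀ i, x i * s i = ⟪xb, sb⟫ / n) :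
    ∀ i, (1 / (2 * n)) * xb i ≤ x i ∧ x i ≤ (2 * n / (1 - θ)) * xb i ∧
      (1 / (2 * n)) * sb i ≤ s i ∧ s i ≤ (2 * n / (1 - θ)) * sb i := by
  intro i
  have hn : (0 : ℝ) < n := Nat.cast_pos.mpr i.pos
  have hcross : x i * sb i + xb i * s i ≤ 2 * n * (⟪xb, sb⟫ / n) :=
    calc x i * sb i + xb i * s i ≤ ⟪x, s⟫ + ⟪xb, sb⟫ :=
          EuclideanSpace.mul_add_mul_le_of_sub_mem_orthogonal (fun j => (hxpos j).le)
            (fun j => (hxbpos j).le) (fun j => (hspos j).le) (fun j => (hsbpos j).le)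
            (by simpa using W.sub_mem hxW hxb) (by simpa using Wᗮ.sub_mem hsW hsb) i
      _ = 2 * n * (⟪xb, sb⟫ / n) := by
          rw [EuclideanSpace.real_inner_eq_card_mul hxs, Fintype.card_fin]
          field_simp
          ring
  have hx := bounds_of_mul_add_mul_le (N := 2 * n) (by positivity) (hxpos i) (hxbpos i)
    (hspos i) (hsbpos i) hθ1 (hxs i) (hwide i) hcross
  have hs := bounds_of_mul_add_mul_le (N := 2 * n) (μ := ⟪xb, sb⟫ / n) (by positivity)
    (hspos i) (hsbpos i) (hxpos i) (hxbpos i) hθ1 (by rw [mul_comm]; exact hxs i)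
    (by rw [mul_comm (sb i)]; exact hwide i)
    (by linarith [mul_comm (s i) (xb i), mul_comm (sb i) (x i)])
  exact ⟨hx.1, hx.2, hs.1, hs.2⟩

theorem statement3 (n : ℕ) (hn : 1 ≤ n)
    (W : Submodule ℝ (EuclideanSpace ℝ (Fin n)))
    (d c : EuclideanSpace ℝ (Fin n))
    (θ : ℝ) (hθ0 : 0 ≤ θ) (hθ1 : θ < 1)
    (xb sb x s : EuclideanSpace ℝ (Fin n))
    (hxb : xb - d ∈ W) (hsb : sb - c ∈ Wᗮ)
    (hxbpos : ∀ i, 0 < xb i) (hsbpos : ∀ i, 0 < sb i)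
    (hwide : ∀ i, (1 - θ) * (⟪xb, sb⟫ / n) ≤ xb i * sb i)
    (hxW : x - d ∈ W) (hsW : s - c ∈ Wᗮ)
    (hxpos : ∀ i, 0 < x i) (hspos : ∀ i, 0 < s i)
    (hxs : ∀ i, x i * s i = ⟪xb, sb⟫ / n) :
    ∀ i, (1 / (2 * n)) * xb i ≤ x i ∧ x i ≤ (2 * n / (1 - θ)) * xb i ∧
      (1 / (2 * n)) * sb i ≤ s i ∧ s i ≤ (2 * n / (1 - θ)) * sb i :=
  statement3_general n W d c θ hθ1 xb sb x s hxb hsb hxbpos hsbpos hwide hxW hsW hxpos hspos hxs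
end

section
/- Let n ≥ 1, W a linear subspace of ℝⁿ, d, c ∈ ℝⁿ, and β ∈ (0, 1/6]. Suppose x ∈ W + d, s ∈ W⊥ + c, x > 0, s > 0, μ = ⟨x,s⟩/n > 0 and ‖xs/μ − 1‖ ≤ β (products and quotients of vectors entrywise, 1 the all-ones vector, ‖·‖ the Euclidean norm). Let Δx ∈ W and Δs ∈ W⊥ satisfy ‖Δx·Δs‖ ≤ βμ/4, and set γ = ‖(x + Δx)(s + Δs)‖/μ. Then for every α with 0 ≤ α ≤ 1 − 4γ/β, writing x_α = x + αΔx, s_α = s + αΔs and μ_α = ⟨x_α, s_α⟩/n, we have: x_α ≥ 0, s_α ≥ 0, ‖x_α s_α − μ_α·1‖ ≤ 2β·μ_α, and μ_α ≤ (1 + (3/2)·β/√n)·(1 − α)·μ. -/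
/-!
Along the step, `x_α s_α = (1 - α) x s + α (x + Δx)(s + Δs) - α (1 - α) Δx Δs` entrywise, and
`⟪Δx, Δs⟫ = 0` makes the duality gap affine in `α`: `μ_α = (1 - α) μ + α σ` with `σ` the mean of
`(x + Δx)(s + Δs)`. Centering does not increase the Euclidean norm and `|σ| ≤ γ μ / √n`, so
the three terms give `‖x_α s_α - μ_α‖ ≤ (3/2) β (1 - α) μ` as soon as `4 γ ≤ β (1 - α)`, while
`μ_α ≥ (1 - α)(1 - β/4) μ`. Hence the step stays in `N²(2β) ⊆ N²(1/3)`, so `x_α s_α > 0` for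
`α < 1`, and by continuity no coordinate of `x_α` or `s_α` can change sign.
-/

open scoped RealInnerProductSpace

/-- Interpret a function `Fin n → ℝ` as a vector of `EuclideanSpace ℝ (Fin n)`. -/
noncomputable def euc {n : ℕ} (f : Fin n → ℝ) : EuclideanSpace ℝ (Fin n) := WithLp.toLp 2 f

section Euclidean

variable {n : ℕ}

theorem real_inner_eq_sum_mul (a b : EuclideanSpace ℝ (Fin n)) :
    ⟪a, b⟫ = ∑ i, a i * b i := by
  simp only [PiLp.inner_apply, RCLike.inner_apply, Real.ringHom_apply, mul_comm]

theorem abs_le_norm_euc (f : Fin n → ℝ) (i : Fin n) : |f i| ≤ ‖euc f‖ :=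
  PiLp.norm_apply_le (euc f) i

theorem norm_euc_one : ‖euc (fun _ : Fin n => (1 : ℝ))‖ = √n := by
  simp [EuclideanSpace.norm_eq, euc]

theorem sum_eq_inner_euc_one (f : Fin n → ℝ) : ∑ i, f i = ⟪euc (fun _ => 1), euc f⟫ := by
  simp [real_inner_eq_sum_mul, euc]

theorem abs_sum_div_le_norm_euc_div_sqrt (f : Fin n → ℝ) :
    |(∑ i, f i) / n| ≤ ‖euc f‖ / √n := by
  have hcs : |∑ i, f i| ≤ √n * ‖euc f‖ := by
    rw [sum_eq_inner_euc_one, ← norm_euc_one]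
    exact abs_real_inner_le_norm _ _
  calc |(∑ i, f i) / n| = |∑ i, f i| / n := by rw [abs_div, Nat.abs_cast]
    _ ≤ √n * ‖euc f‖ / n := by gcongr
    _ = ‖euc f‖ / √n := by rw [mul_comm, mul_div_assoc, Real.sqrt_div_self', mul_one_div]

theorem norm_euc_sub_mean_le (f : Fin n → ℝ) :
    ‖euc (fun i => f i - (∑ j, f j) / n)‖ ≤ ‖euc f‖ := by
  set m := (∑ j, f j) / n
  have hsum : ⟪euc f, euc (fun _ => 1)⟫ = n * m := by
    rw [real_inner_comm, ← sum_eq_inner_euc_one]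
    rcases n.eq_zero_or_pos with rfl | hn
    · simp
    · exact (mul_div_cancel₀ _ (by positivity)).symm
  have hvec : euc (fun i => f i - m) = euc f - m • euc (fun _ => 1) := by
    ext i; simp [euc]
  have hsq : ‖euc (fun i => f i - m)‖ ^ 2 = ‖euc f‖ ^ 2 - n * m ^ 2 := by
    rw [hvec, norm_sub_sq_real, real_inner_smul_right, norm_smul, mul_pow, norm_euc_one,
      Real.sq_sqrt n.cast_nonneg, Real.norm_eq_abs, sq_abs, hsum]
    ring
  refine pow_le_pow_iff_left₀ (norm_nonneg _) (norm_nonneg _) two_ne_zero |>.mp ?_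
  rw [hsq]
  nlinarith [sq_nonneg m, (n.cast_nonneg : (0 : ℝ) ≤ n)]

theorem pos_of_norm_euc_sub_le {f : Fin n → ℝ} {m θ : ℝ} (hm : 0 < m) (hθ : θ < 1)
    (h : ‖euc (fun i => f i - m)‖ ≤ θ * m) (i : Fin n) : 0 < f i := by
  have := (abs_le_norm_euc (fun i => f i - m) i).trans h
  nlinarith [neg_abs_le (f i - m)]

end Euclidean

theorem inner_add_smul_add_smul_of_inner_eq_zero {E : Type*} [NormedAddCommGroup E]
    [InnerProductSpace ℝ E] {x s Δx Δs : E} (h : ⟪Δx, Δs⟫ = 0) (t : ℝ) :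
    ⟪x + t • Δx, s + t • Δs⟫ = (1 - t) * ⟪x, s⟫ + t * ⟪x + Δx, s + Δs⟫ := by
  simp only [inner_add_left, inner_add_right, real_inner_smul_left, real_inner_smul_right, h]
  ring

theorem nonneg_of_forall_Ico_ne_zero {f : ℝ → ℝ} {a b : ℝ} (hab : a ≤ b)
    (hf : ContinuousOn f (Set.Icc a b)) (ha : 0 ≤ f a) (hne : ∀ t ∈ Set.Ico a b, f t ≠ 0) :
    0 ≤ f b := by
  by_contra! hb
  obtain ⟨t, ht, hft⟩ := intermediate_value_Icc' hab hf ⟨hb.le, ha⟩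
  exact hne t ⟨ht.1, ht.2.lt_of_ne (by rintro rfl; linarith)⟩ hft

section Step

variable {n : ℕ} {x s Δx Δs : EuclideanSpace ℝ (Fin n)} {β μ t : ℝ}

theorem norm_step_sub_gap_le (horth : ⟪Δx, Δs⟫ = 0) (ht0 : 0 ≤ t) (ht1 : t ≤ 1) :
    ‖euc (fun i => (x i + t * Δx i) * (s i + t * Δs i) - ⟪x + t • Δx, s + t • Δs⟫ / n)‖ ≤
      (1 - t) * ‖euc (fun i => x i * s i - ⟪x, s⟫ / n)‖ +
        t * ‖euc (fun i => (x i + Δx i) * (s i + Δs i))‖ +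
        t * (1 - t) * ‖euc (fun i => Δx i * Δs i)‖ := by
  set q : Fin n → ℝ := fun i => (x i + Δx i) * (s i + Δs i)
  have hvec :
      euc (fun i => (x i + t * Δx i) * (s i + t * Δs i) - ⟪x + t • Δx, s + t • Δs⟫ / n) =
        (1 - t) • euc (fun i => x i * s i - ⟪x, s⟫ / n) +
          t • euc (fun i => q i - (∑ j, q j) / n) -
          (t * (1 - t)) • euc (fun i => Δx i * Δs i) := by
    rw [inner_add_smul_add_smul_of_inner_eq_zero horth, real_inner_eq_sum_mul (x + Δx)]
    ext i
    simp only [euc, q, PiLp.toLp_apply, PiLp.add_apply, PiLp.sub_apply, PiLp.smul_apply,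
      smul_eq_mul]
    ring
  have h1t : 0 ≤ 1 - t := sub_nonneg.mpr ht1
  rw [hvec]
  calc _ ≤ ‖(1 - t) • euc (fun i => x i * s i - ⟪x, s⟫ / n)‖ +
          ‖t • euc (fun i => q i - (∑ j, q j) / n)‖ +
          ‖(t * (1 - t)) • euc (fun i => Δx i * Δs i)‖ :=
        norm_sub_le_of_le (norm_add_le _ _) le_rfl
    _ = (1 - t) * ‖euc (fun i => x i * s i - ⟪x, s⟫ / n)‖ +
          t * ‖euc (fun i => q i - (∑ j, q j) / n)‖ +
          t * (1 - t) * ‖euc (fun i => Δx i * Δs i)‖ := by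
      simp only [norm_smul, Real.norm_of_nonneg h1t, Real.norm_of_nonneg ht0,
        Real.norm_of_nonneg (mul_nonneg ht0 h1t)]
    _ ≤ _ := by gcongr; exact norm_euc_sub_mean_le q

theorem step_estimates (hn : 1 ≤ n) (hβ0 : 0 ≤ β) (hβ1 : β ≤ 1) (ht0 : 0 ≤ t) (ht1 : t ≤ 1)
    (horth : ⟪Δx, Δs⟫ = 0) (hμ : μ = ⟪x, s⟫ / n)
    (hctr : ‖euc (fun i => x i * s i - μ)‖ ≤ β * μ)
    (hprod : ‖euc (fun i => Δx i * Δs i)‖ ≤ β * μ / 4)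
    (hfull : ‖euc (fun i => (x i + Δx i) * (s i + Δs i))‖ ≤ β * (1 - t) * μ / 4) :
    (1 - t) * (1 - β / 4) * μ ≤ ⟪x + t • Δx, s + t • Δs⟫ / n ∧
      ⟪x + t • Δx, s + t • Δs⟫ / n ≤ (1 + β / (4 * √n)) * (1 - t) * μ ∧
      ‖euc (fun i => (x i + t * Δx i) * (s i + t * Δs i) - ⟪x + t • Δx, s + t • Δs⟫ / n)‖ ≤
        2 * β * (⟪x + t • Δx, s + t • Δs⟫ / n) := by
  set q : Fin n → ℝ := fun i => (x i + Δx i) * (s i + Δs i)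
  set σ := (∑ i, q i) / n
  have h1t : 0 ≤ 1 - t := sub_nonneg.mpr ht1
  have hgap : ⟪x + t • Δx, s + t • Δs⟫ / n = (1 - t) * μ + t * σ := by
    rw [inner_add_smul_add_smul_of_inner_eq_zero horth, real_inner_eq_sum_mul (x + Δx), hμ]
    simp only [σ, q, PiLp.add_apply]
    ring
  have hσ : |σ| ≤ ‖euc q‖ / √n := abs_sum_div_le_norm_euc_div_sqrt q
  have hsqrt : 1 ≤ √n := Real.one_le_sqrt.mpr (by exact_mod_cast hn)
  have htσ : |t * σ| ≤ ‖euc q‖ / √n := by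
    rw [abs_mul, abs_of_nonneg ht0]
    exact (mul_le_of_le_one_left (abs_nonneg σ) ht1).trans hσ
  have hlow : (1 - t) * (1 - β / 4) * μ ≤ ⟪x + t • Δx, s + t • Δs⟫ / n := by
    have : ‖euc q‖ / √n ≤ ‖euc q‖ := div_le_self (norm_nonneg _) hsqrt
    rw [hgap]
    linarith [neg_abs_le (t * σ)]
  have hup : ⟪x + t • Δx, s + t • Δs⟫ / n ≤ (1 + β / (4 * √n)) * (1 - t) * μ := by
    have : ‖euc q‖ / √n ≤ β / (4 * √n) * ((1 - t) * μ) := by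
      rw [show β / (4 * √n) * ((1 - t) * μ) = β * (1 - t) * μ / 4 / √n by ring]
      gcongr
    rw [hgap]
    linarith [le_abs_self (t * σ)]
  have hX : 0 ≤ β * (1 - t) * μ := by linarith [norm_nonneg (euc q)]
  have hprox : ‖euc (fun i => (x i + t * Δx i) * (s i + t * Δs i) -
      ⟪x + t • Δx, s + t • Δs⟫ / n)‖ ≤ 3 / 2 * (β * (1 - t) * μ) := by
    refine (norm_step_sub_gap_le horth ht0 ht1).trans ?_
    rw [← hμ]
    calc _ ≤ (1 - t) * (β * μ) + t * (β * (1 - t) * μ / 4) + t * (1 - t) * (β * μ / 4) := by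
          gcongr
      _ = (1 + t / 2) * (β * (1 - t) * μ) := by ring
      _ ≤ 3 / 2 * (β * (1 - t) * μ) := by gcongr; linarith
  refine ⟨hlow, hup, hprox.trans ?_⟩
  nlinarith [mul_le_mul_of_nonneg_left hlow (by positivity : (0 : ℝ) ≤ 2 * β),
    mul_nonneg hX (sub_nonneg.mpr hβ1)]

end Step

theorem statement4_general (n : ℕ) (hn : 1 ≤ n)
    (W : Submodule ℝ (EuclideanSpace ℝ (Fin n)))
    (β : ℝ) (hβ0 : 0 < β) (hβ1 : β ≤ 1 / 6)
    (x s Δx Δs : EuclideanSpace ℝ (Fin n))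
    (hxpos : ∀ i, 0 < x i) (hspos : ∀ i, 0 < s i)
    (μ : ℝ) (hμdef : μ = ⟪x, s⟫ / n) (hμpos : 0 < μ)
    (hctr : ‖euc (fun i => x i * s i / μ - 1)‖ ≤ β)
    (hΔx : Δx ∈ W) (hΔs : Δs ∈ Wᗮ)
    (hprod : ‖euc (fun i => Δx i * Δs i)‖ ≤ β * μ / 4)
    (γ : ℝ) (hγ : γ = ‖euc (fun i => (x i + Δx i) * (s i + Δs i))‖ / μ) :
    ∀ α : ℝ, 0 ≤ α → α ≤ 1 - 4 * γ / β →
      (∀ i, 0 ≤ x i + α * Δx i) ∧ (∀ i, 0 ≤ s i + α * Δs i) ∧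
      ‖euc (fun i => (x i + α * Δx i) * (s i + α * Δs i) -
          ⟪x + α • Δx, s + α • Δs⟫ / n)‖ ≤ 2 * β * (⟪x + α • Δx, s + α • Δs⟫ / n) ∧
      ⟪x + α • Δx, s + α • Δs⟫ / n ≤ (1 + (3 / 2) * β / Real.sqrt n) * (1 - α) * μ := by
  intro α hα0 hα
  have horth : ⟪Δx, Δs⟫ = 0 := Submodule.inner_right_of_mem_orthogonal hΔx hΔs
  have hxs : ‖euc (fun i => x i * s i - μ)‖ ≤ β * μ := by
    have hvec : euc (fun i => x i * s i - μ) = μ • euc (fun i => x i * s i / μ - 1) := by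
      ext i
      simp only [euc, PiLp.toLp_apply, PiLp.smul_apply, smul_eq_mul]
      field_simp
    rw [hvec, norm_smul, Real.norm_of_nonneg hμpos.le, mul_comm]
    gcongr
  have hfull (t : ℝ) (ht : t ≤ α) :
      ‖euc (fun i => (x i + Δx i) * (s i + Δs i))‖ ≤ β * (1 - t) * μ / 4 := by
    have h4γ : 4 * γ ≤ (1 - α) * β := (div_le_iff₀ hβ0).mp (by linarith)
    rw [← div_mul_cancel₀ ‖euc (fun i => (x i + Δx i) * (s i + Δs i))‖ hμpos.ne', ← hγ]
    nlinarith [mul_le_mul_of_nonneg_right h4γ hμpos.le, mul_pos hβ0 hμpos]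
  have hα1 : α ≤ 1 := by
    nlinarith [(norm_nonneg _).trans (hfull α le_rfl), mul_pos hβ0 hμpos]
  have hest (t : ℝ) (ht : t ∈ Set.Icc 0 α) := step_estimates hn hβ0.le (by linarith) ht.1
    (ht.2.trans hα1) horth hμdef hxs hprod (hfull t ht.2)
  have hpos (t : ℝ) (ht : t ∈ Set.Ico 0 α) (i : Fin n) :
      0 < (x i + t * Δx i) * (s i + t * Δs i) := by
    obtain ⟨hlow, -, hprox⟩ := hest t (Set.Ico_subset_Icc_self ht)
    have h1t : 0 < 1 - t := by linarith [ht.2]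
    have hgap : 0 < ⟪x + t • Δx, s + t • Δs⟫ / n :=
      hlow.trans_lt' (mul_pos (mul_pos h1t (by linarith)) hμpos)
    exact pos_of_norm_euc_sub_le hgap (by linarith) hprox i
  obtain ⟨-, hup, hprox⟩ := hest α ⟨hα0, le_rfl⟩
  refine ⟨fun i => ?_, fun i => ?_, hprox, hup.trans ?_⟩
  · exact nonneg_of_forall_Ico_ne_zero (f := fun t => x i + t * Δx i) hα0 (by fun_prop)
      (by simpa using (hxpos i).le) fun t ht => left_ne_zero_of_mul (hpos t ht i).ne'
  · exact nonneg_of_forall_Ico_ne_zero (f := fun t => s i + t * Δs i) hα0 (by fun_prop)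
      (by simpa using (hspos i).le) fun t ht => right_ne_zero_of_mul (hpos t ht i).ne'
  · gcongr <;> linarith [Real.sqrt_nonneg n]

theorem statement4 (n : ℕ) (hn : 1 ≤ n)
    (W : Submodule ℝ (EuclideanSpace ℝ (Fin n)))
    (d c : EuclideanSpace ℝ (Fin n))
    (β : ℝ) (hβ0 : 0 < β) (hβ1 : β ≤ 1 / 6)
    (x s Δx Δs : EuclideanSpace ℝ (Fin n))
    (hx : x - d ∈ W) (hs : s - c ∈ Wᗮ)
    (hxpos : ∀ i, 0 < x i) (hspos : ∀ i, 0 < s i)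
    (μ : ℝ) (hμdef : μ = ⟪x, s⟫ / n) (hμpos : 0 < μ)
    (hctr : ‖euc (fun i => x i * s i / μ - 1)‖ ≤ β)
    (hΔx : Δx ∈ W) (hΔs : Δs ∈ Wᗮ)
    (hprod : ‖euc (fun i => Δx i * Δs i)‖ ≤ β * μ / 4)
    (γ : ℝ) (hγ : γ = ‖euc (fun i => (x i + Δx i) * (s i + Δs i))‖ / μ) :
    ∀ α : ℝ, 0 ≤ α → α ≤ 1 - 4 * γ / β →
      (∀ i, 0 ≤ x i + α * Δx i) ∧ (∀ i, 0 ≤ s i + α * Δs i) ∧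
      ‖euc (fun i => (x i + α * Δx i) * (s i + α * Δs i) -
          ⟪x + α • Δx, s + α • Δs⟫ / n)‖ ≤ 2 * β * (⟪x + α • Δx, s + α • Δs⟫ / n) ∧
      ⟪x + α • Δx, s + α • Δs⟫ / n ≤ (1 + (3 / 2) * β / Real.sqrt n) * (1 - α) * μ :=
  statement4_general n hn W β hβ0 hβ1 x s Δx Δs hxpos hspos μ hμdef hμpos hctr hΔx hΔs hprod γ hγ
end

section
/- For all real numbers u, v > 0, the denominator 1 − α + α·u·v is positive for all α ∈ [0,1], the function α ↦ ((1 − α + αu)(1 − α + αv))/(1 − α + α·u·v) attains its minimum over [0,1], and min_{α ∈ [0,1]} ((1 − α + αu)(1 − α + αv))/(1 − α + α·u·v) = min{ 1, ((√u + √v)/(1 + √(uv)))² } ≤ 2(u + v). -/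
/-!
Write `f(α) = N(α) / D(α)` for the function being minimised. Two polynomial identities settle
everything. First, `N - D = -α(1-α)(1-u)(1-v)`, so when `(1-u)(1-v) ≤ 0` we have `f ≥ 1 = f(0)`.
Second, with `a = √u`, `b = √v`, `N (1+ab)² - (a+b)² D = (1-a²)(1-b²)(α(1+ab) - 1)²`, so when
`(1-u)(1-v) ≥ 0` we have `f ≥ ((a+b)/(1+ab))² = f(1/(1+ab))`. Both candidate values are attained
on `[0,1]`, so their minimum is too, and it bounds `f` from below in either case.
-/

open Set

noncomputable def mixRatio (u v α : ℝ) : ℝ :=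
  ((1 - α + α * u) * (1 - α + α * v)) / (1 - α + α * (u * v))

lemma one_sub_add_mul_pos {α x : ℝ} (hα : α ∈ Icc (0 : ℝ) 1) (hx : 0 < x) :
    0 < 1 - α + α * x := by
  obtain ⟨h0, h1⟩ := hα
  nlinarith [mul_nonneg h0 hx.le, mul_nonneg (sub_nonneg.2 h1) hx.le]

lemma mixRatio_zero (u v : ℝ) : mixRatio u v 0 = 1 := by
  simp [mixRatio]

lemma one_le_mixRatio {u v α : ℝ} (hα : α ∈ Icc (0 : ℝ) 1) (huv : 0 < u * v)
    (h : (1 - u) * (1 - v) ≤ 0) : 1 ≤ mixRatio u v α := by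
  have hD := one_sub_add_mul_pos hα huv
  have key : (1 - α + α * u) * (1 - α + α * v) - (1 - α + α * (u * v))
      = -(α * (1 - α)) * ((1 - u) * (1 - v)) := by ring
  rw [mixRatio, le_div_iff₀ hD, one_mul, ← sub_nonneg, key]
  exact mul_nonneg_of_nonpos_of_nonpos
    (neg_nonpos.2 (mul_nonneg hα.1 (sub_nonneg.2 hα.2))) h

lemma mixRatio_sq_inv_one_add_mul {a b : ℝ} (ha : 0 < a) (hb : 0 < b) :
    mixRatio (a ^ 2) (b ^ 2) (1 / (1 + a * b)) = ((a + b) / (1 + a * b)) ^ 2 := by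
  have hab : 0 < 1 + a * b := by positivity
  have hA : 1 - 1 / (1 + a * b) + 1 / (1 + a * b) * a ^ 2 = a * (a + b) / (1 + a * b) := by
    field_simp; ring
  have hB : 1 - 1 / (1 + a * b) + 1 / (1 + a * b) * b ^ 2 = b * (a + b) / (1 + a * b) := by
    field_simp; ring
  have hAB : 1 - 1 / (1 + a * b) + 1 / (1 + a * b) * (a ^ 2 * b ^ 2) = a * b := by
    field_simp; ring
  rw [mixRatio, hA, hB, hAB]
  field_simp

lemma sq_div_le_mixRatio {a b α : ℝ} (ha : 0 < a) (hb : 0 < b) (hα : α ∈ Icc (0 : ℝ) 1)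
    (h : 0 ≤ (1 - a ^ 2) * (1 - b ^ 2)) :
    ((a + b) / (1 + a * b)) ^ 2 ≤ mixRatio (a ^ 2) (b ^ 2) α := by
  have hD := one_sub_add_mul_pos hα (by positivity : 0 < a ^ 2 * b ^ 2)
  have key : (1 - α + α * a ^ 2) * (1 - α + α * b ^ 2) * (1 + a * b) ^ 2
      - (a + b) ^ 2 * (1 - α + α * (a ^ 2 * b ^ 2))
      = (1 - a ^ 2) * (1 - b ^ 2) * (α * (1 + a * b) - 1) ^ 2 := by ring
  rw [mixRatio, div_pow, div_le_div_iff₀ (by positivity) hD, ← sub_nonneg, key]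
  exact mul_nonneg h (sq_nonneg _)

lemma isLeast_mixRatio_sq {a b : ℝ} (ha : 0 < a) (hb : 0 < b) :
    IsLeast {t : ℝ | ∃ α ∈ Icc (0 : ℝ) 1, t = mixRatio (a ^ 2) (b ^ 2) α}
      (min 1 (((a + b) / (1 + a * b)) ^ 2)) := by
  have hab : 0 < a * b := mul_pos ha hb
  constructor
  · rcases min_choice 1 (((a + b) / (1 + a * b)) ^ 2) with h | h <;> rw [h]
    · exact ⟨0, left_mem_Icc.2 zero_le_one, (mixRatio_zero _ _).symm⟩
    · refine ⟨1 / (1 + a * b), ⟨by positivity, ?_⟩, (mixRatio_sq_inv_one_add_mul ha hb).symm⟩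
      rw [div_le_one (by positivity)]
      linarith
  · rintro t ⟨α, hα, rfl⟩
    rcases le_total ((1 - a ^ 2) * (1 - b ^ 2)) 0 with h | h
    · exact (min_le_left _ _).trans (one_le_mixRatio hα (by positivity) h)
    · exact (min_le_right _ _).trans (sq_div_le_mixRatio ha hb hα h)

lemma sq_div_one_add_mul_le {a b : ℝ} (hab : 0 ≤ a * b) :
    ((a + b) / (1 + a * b)) ^ 2 ≤ 2 * (a ^ 2 + b ^ 2) := by
  calc ((a + b) / (1 + a * b)) ^ 2 = (a + b) ^ 2 / (1 + a * b) ^ 2 := div_pow _ _ _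
    _ ≤ (a + b) ^ 2 := div_le_self (sq_nonneg _) (one_le_pow₀ (by linarith))
    _ ≤ 2 * (a ^ 2 + b ^ 2) := by nlinarith [sq_nonneg (a - b)]

theorem statement14 (u v : ℝ) (hu : 0 < u) (hv : 0 < v) :
    (∀ α ∈ Set.Icc (0 : ℝ) 1, 0 < 1 - α + α * (u * v)) ∧
    IsLeast {t : ℝ | ∃ α ∈ Set.Icc (0 : ℝ) 1,
        t = ((1 - α + α * u) * (1 - α + α * v)) / (1 - α + α * (u * v))}
      (min 1 (((Real.sqrt u + Real.sqrt v) / (1 + Real.sqrt (u * v))) ^ 2)) ∧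
    min 1 (((Real.sqrt u + Real.sqrt v) / (1 + Real.sqrt (u * v))) ^ 2) ≤ 2 * (u + v) := by
  refine ⟨fun α hα ↦ one_sub_add_mul_pos hα (mul_pos hu hv), ?_⟩
  obtain ⟨a, ha, rfl⟩ : ∃ a, 0 < a ∧ u = a ^ 2 :=
    ⟨√u, Real.sqrt_pos.2 hu, (Real.sq_sqrt hu.le).symm⟩
  obtain ⟨b, hb, rfl⟩ : ∃ b, 0 < b ∧ v = b ^ 2 :=
    ⟨√v, Real.sqrt_pos.2 hv, (Real.sq_sqrt hv.le).symm⟩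
  have hsqrt : √(a ^ 2 * b ^ 2) = a * b := by
    rw [← mul_pow, Real.sqrt_sq (mul_pos ha hb).le]
  rw [Real.sqrt_sq ha.le, Real.sqrt_sq hb.le, hsqrt]
  exact ⟨isLeast_mixRatio_sq ha hb,
    (min_le_right _ _).trans (sq_div_one_add_mul_le (mul_pos ha hb).le)⟩
end

section
/- Let n ≥ 1, W a linear subspace of ℝⁿ, d, c ∈ ℝⁿ, γ ∈ (0,1] and 0 < μ₁ ≤ μ₀. Suppose z^cp : [μ₁, μ₀] → ℝⁿ × ℝⁿ assigns to each μ a central path point (x(μ), s(μ)) at parameter μ, and that the segment is γ-polarized with respect to a partition B ∪ N = [n]: for all μ ∈ [μ₁, μ₀], x_i(μ) ≥ γ·x_i(μ₀) for i ∈ B and s_i(μ) ≥ γ·s_i(μ₀) for i ∈ N. Then for all μ ∈ [μ₁, μ₀]: (1) γ·x_i(μ₀) ≤ x_i(μ) ≤ n·x_i(μ₀) for i ∈ B; (2) γ·s_i(μ₀) ≤ s_i(μ) ≤ n·s_i(μ₀) for i ∈ N; (3) (μ/(n μ₀))·x_i(μ₀) ≤ x_i(μ) ≤ (μ/(γ μ₀))·x_i(μ₀)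 for i ∈ N; (4) (μ/(n μ₀))·s_i(μ₀) ≤ s_i(μ) ≤ (μ/(γ μ₀))·s_i(μ₀) for i ∈ B. -/
/-!
Subtracting the two points of the central path at `μ ≤ μ₀` gives `x(μ) - x(μ₀) ∈ W` and
`s(μ) - s(μ₀) ∈ W⊥`, hence `∑ᵢ (aᵢ + bᵢ) = n (μ + μ₀)` for the cross products
`aᵢ = xᵢ(μ) sᵢ(μ₀)` and `bᵢ = xᵢ(μ₀) sᵢ(μ)`. Since `aᵢ bᵢ = μ μ₀ ≥ μ²`, every `aᵢ + bᵢ - 2μ` is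
nonnegative, so each one is at most the total `n (μ₀ - μ)`; with `aᵢ bᵢ = μ μ₀` this forces
`aᵢ, bᵢ ≤ n μ₀`, i.e. `xᵢ(μ) ≤ n xᵢ(μ₀)` and `sᵢ(μ) ≤ n sᵢ(μ₀)`. The remaining bounds follow
from these, and from polarization, through `xᵢ sᵢ = μ`.
-/

open scoped RealInnerProductSpace

theorem inner_add_inner_eq_of_sub_mem_s16 {E : Type*} [NormedAddCommGroup E] [InnerProductSpace ℝ E]
    {W : Submodule ℝ E} {d c x x₀ s s₀ : E} (hx : x - d ∈ W) (hx₀ : x₀ - d ∈ W)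
    (hs : s - c ∈ Wᗮ) (hs₀ : s₀ - c ∈ Wᗮ) :
    ⟪x, s₀⟫ + ⟪x₀, s⟫ = ⟪x, s⟫ + ⟪x₀, s₀⟫ := by
  have hW : x - x₀ ∈ W := by simpa using W.sub_mem hx hx₀
  have hWo : s - s₀ ∈ Wᗮ := by simpa using Wᗮ.sub_mem hs hs₀
  have h := Submodule.inner_right_of_mem_orthogonal hW hWo
  simp only [inner_sub_left, inner_sub_right] at h
  linarith

theorem two_mul_le_add_of_mul_eq {a b μ μ₀ : ℝ} (ha : 0 < a)
    (hab : a * b = μ * μ₀) (hμ : 0 ≤ μ) (hμμ₀ : μ ≤ μ₀) : 2 * μ ≤ a + b := by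
  nlinarith [sq_nonneg (a - μ), mul_le_mul_of_nonneg_left hμμ₀ hμ]

theorem le_mul_of_add_sub_le {a b μ μ₀ k : ℝ} (ha : 0 < a)
    (hab : a * b = μ * μ₀) (hμ : 0 < μ) (hμμ₀ : μ ≤ μ₀) (hk : 1 ≤ k)
    (h : a + b - 2 * μ ≤ k * (μ₀ - μ)) : a ≤ k * μ₀ := by
  by_contra! hlt
  -- By `h`, `a (a + b - k μ₀ + (k - 2) μ) ≤ 0`, yet it equals
  -- `(a - k μ₀)(a + (k - 2) μ) + (k - 1)² μ μ₀ > 0`.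
  have hpos : 0 < a + (k - 2) * μ := by nlinarith
  have hμμ₀pos : 0 < μ * μ₀ := mul_pos hμ (hμ.trans_le hμμ₀)
  nlinarith [mul_pos (sub_pos.2 hlt) hpos, mul_nonneg (sq_nonneg (k - 1)) hμμ₀pos.le]

theorem le_card_mul_of_sum_add_eq {ι : Type*} [Fintype ι] {a b : ι → ℝ} {μ μ₀ : ℝ}
    (ha : ∀ i, 0 < a i) (hab : ∀ i, a i * b i = μ * μ₀)
    (hμ : 0 < μ) (hμμ₀ : μ ≤ μ₀) (hsum : ∑ i, (a i + b i) = Fintype.card ι * (μ + μ₀))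
    (i : ι) : a i ≤ Fintype.card ι * μ₀ := by
  have hterm : ∀ j, 0 ≤ a j + b j - 2 * μ := fun j =>
    sub_nonneg.2 (two_mul_le_add_of_mul_eq (ha j) (hab j) hμ.le hμμ₀)
  have hle : a i + b i - 2 * μ ≤ Fintype.card ι * (μ₀ - μ) :=
    calc a i + b i - 2 * μ ≤ ∑ j, (a j + b j - 2 * μ) :=
          Finset.single_le_sum (fun j _ => hterm j) (Finset.mem_univ i)
      _ = Fintype.card ι * (μ₀ - μ) := by
          rw [Finset.sum_sub_distrib, hsum, Finset.sum_const, Finset.card_univ, nsmul_eq_mul]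
          ring
  have hcard : (1 : ℝ) ≤ Fintype.card ι := by
    have : Nonempty ι := ⟨i⟩
    exact_mod_cast Fintype.card_pos
  exact le_mul_of_add_sub_le (ha i) (hab i) hμ hμμ₀ hcard hle

theorem le_div_mul_of_mul_le {x s x₀ s₀ μ μ₀ κ : ℝ} (hx : 0 < x) (hx₀ : 0 < x₀) (hs₀ : 0 < s₀)
    (hκ : 0 < κ) (hxs : x * s = μ) (hxs₀ : x₀ * s₀ = μ₀) (h : κ * s₀ ≤ s) :
    x ≤ μ / (κ * μ₀) * x₀ := by
  subst hxs hxs₀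
  rw [show x * s / (κ * (x₀ * s₀)) * x₀ = x * s / (κ * s₀) by field_simp,
    le_div_iff₀ (by positivity)]
  exact mul_le_mul_of_nonneg_left h hx.le

theorem div_mul_le_of_le_mul {x s x₀ s₀ μ μ₀ κ : ℝ} (hx : 0 < x) (hs : 0 < s) (hx₀ : 0 < x₀)
    (hs₀ : 0 < s₀) (hxs : x * s = μ) (hxs₀ : x₀ * s₀ = μ₀) (h : s ≤ κ * s₀) :
    μ / (κ * μ₀) * x₀ ≤ x := by
  have hκ : 0 < κ := pos_of_mul_pos_left (hs.trans_le h) hs₀.le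
  subst hxs hxs₀
  rw [show x * s / (κ * (x₀ * s₀)) * x₀ = x * s / (κ * s₀) by field_simp,
    div_le_iff₀ (by positivity)]
  exact mul_le_mul_of_nonneg_left h hx.le

section CentralPath

variable {ι : Type*} [Fintype ι]

structure IsCentralPathPoint (W : Submodule ℝ (EuclideanSpace ℝ ι)) (d c : EuclideanSpace ℝ ι)
    (μ : ℝ) (x s : EuclideanSpace ℝ ι) : Prop where
  sub_mem : x - d ∈ W
  sub_mem_orthogonal : s - c ∈ Wᗮ
  pos_left : ∀ i, 0 < x i
  pos_right : ∀ i, 0 < s i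
  mul_eq : ∀ i, x i * s i = μ

namespace IsCentralPathPoint

variable {W : Submodule ℝ (EuclideanSpace ℝ ι)} {d c x s x₀ s₀ : EuclideanSpace ℝ ι} {μ μ₀ : ℝ}

theorem sum_mul_add_mul (h : IsCentralPathPoint W d c μ x s)
    (h₀ : IsCentralPathPoint W d c μ₀ x₀ s₀) :
    ∑ i, (x i * s₀ i + x₀ i * s i) = Fintype.card ι * (μ + μ₀) := by
  have hinner := inner_add_inner_eq_of_sub_mem_s16 h.sub_mem h₀.sub_mem h.sub_mem_orthogonal
    h₀.sub_mem_orthogonal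
  simp only [PiLp.inner_apply, RCLike.inner_apply, conj_trivial, ← Finset.sum_add_distrib]
    at hinner
  simp only [mul_comm (s₀ _), mul_comm (s _), h.mul_eq, h₀.mul_eq] at hinner
  rw [hinner, Finset.sum_const, Finset.card_univ, nsmul_eq_mul]

theorem le_card_mul (h : IsCentralPathPoint W d c μ x s) (h₀ : IsCentralPathPoint W d c μ₀ x₀ s₀)
    (hμ : 0 < μ) (hμμ₀ : μ ≤ μ₀) (i : ι) :
    x i ≤ Fintype.card ι * x₀ i ∧ s i ≤ Fintype.card ι * s₀ i := by
  have hsum := h.sum_mul_add_mul h₀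
  have hprod : ∀ j, (x j * s₀ j) * (x₀ j * s j) = μ * μ₀ := fun j => by
    rw [← h.mul_eq j, ← h₀.mul_eq j]; ring
  have hxs₀ : ∀ j, 0 < x j * s₀ j := fun j => mul_pos (h.pos_left j) (h₀.pos_right j)
  have hx₀s : ∀ j, 0 < x₀ j * s j := fun j => mul_pos (h₀.pos_left j) (h.pos_right j)
  have ha := le_card_mul_of_sum_add_eq hxs₀ hprod hμ hμμ₀ hsum i
  have hb := le_card_mul_of_sum_add_eq hx₀s (fun j => by rw [mul_comm, hprod]) hμ hμμ₀
    (by simpa only [add_comm] using hsum) i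
  rw [← h₀.mul_eq i] at ha hb
  constructor
  · exact le_of_mul_le_mul_right (by linarith) (h₀.pos_right i)
  · exact le_of_mul_le_mul_right (by linarith) (h₀.pos_left i)

end IsCentralPathPoint

end CentralPath

theorem statement16_general (n : ℕ)
    (W : Submodule ℝ (EuclideanSpace ℝ (Fin n)))
    (d c : EuclideanSpace ℝ (Fin n))
    (γ μ₀ μ₁ : ℝ) (hγ : γ ∈ Set.Ioc (0 : ℝ) 1) (hμ₁ : 0 < μ₁)
    -- the central path on `[μ₁, μ₀]`
    (x s : ℝ → EuclideanSpace ℝ (Fin n))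
    (hcp : ∀ μ ∈ Set.Icc μ₁ μ₀,
      x μ - d ∈ W ∧ s μ - c ∈ Wᗮ ∧
      (∀ i, 0 < x μ i) ∧ (∀ i, 0 < s μ i) ∧ (∀ i, x μ i * s μ i = μ))
    -- the segment is `γ`-polarized with partition `B ∪ N = [n]`, `N = Bᶜ`
    (B : Finset (Fin n))
    (hpol : ∀ μ ∈ Set.Icc μ₁ μ₀,
      (∀ i ∈ B, γ * x μ₀ i ≤ x μ i) ∧ (∀ i ∉ B, γ * s μ₀ i ≤ s μ i)) :
    ∀ μ ∈ Set.Icc μ₁ μ₀,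
      (∀ i ∈ B, γ * x μ₀ i ≤ x μ i ∧ x μ i ≤ n * x μ₀ i) ∧
      (∀ i ∉ B, γ * s μ₀ i ≤ s μ i ∧ s μ i ≤ n * s μ₀ i) ∧
      (∀ i ∉ B, (μ / (n * μ₀)) * x μ₀ i ≤ x μ i ∧ x μ i ≤ (μ / (γ * μ₀)) * x μ₀ i) ∧
      (∀ i ∈ B, (μ / (n * μ₀)) * s μ₀ i ≤ s μ i ∧ s μ i ≤ (μ / (γ * μ₀)) * s μ₀ i) := by
  intro μ hμ
  have central : ∀ μ' ∈ Set.Icc μ₁ μ₀, IsCentralPathPoint W d c μ' (x μ') (s μ') := fun μ' hμ' =>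
    let ⟨h₁, h₂, h₃, h₄, h₅⟩ := hcp μ' hμ'
    ⟨h₁, h₂, h₃, h₄, h₅⟩
  have h := central μ hμ
  have h₀ := central μ₀ ⟨hμ.1.trans hμ.2, le_rfl⟩
  have hμpos : 0 < μ := hμ₁.trans_le hμ.1
  obtain ⟨hpolx, hpols⟩ := hpol μ hμ
  have hbound := h.le_card_mul h₀ hμpos hμ.2
  simp only [Fintype.card_fin] at hbound
  refine ⟨fun i hi => ⟨hpolx i hi, (hbound i).1⟩, fun i hi => ⟨hpols i hi, (hbound i).2⟩,
    fun i hi => ⟨?_, ?_⟩, fun i hi => ⟨?_, ?_⟩⟩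
  · exact div_mul_le_of_le_mul (h.pos_left i) (h.pos_right i) (h₀.pos_left i) (h₀.pos_right i)
      (h.mul_eq i) (h₀.mul_eq i) (hbound i).2
  · exact le_div_mul_of_mul_le (h.pos_left i) (h₀.pos_left i) (h₀.pos_right i) hγ.1
      (h.mul_eq i) (h₀.mul_eq i) (hpols i hi)
  · exact div_mul_le_of_le_mul (h.pos_right i) (h.pos_left i) (h₀.pos_right i) (h₀.pos_left i)
      (by rw [mul_comm, h.mul_eq]) (by rw [mul_comm, h₀.mul_eq]) (hbound i).1
  · exact le_div_mul_of_mul_le (h.pos_right i) (h₀.pos_right i) (h₀.pos_left i) hγ.1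
      (by rw [mul_comm, h.mul_eq]) (by rw [mul_comm, h₀.mul_eq]) (hpolx i hi)

theorem statement16 (n : ℕ) (hn : 1 ≤ n)
    (W : Submodule ℝ (EuclideanSpace ℝ (Fin n)))
    (d c : EuclideanSpace ℝ (Fin n))
    (γ μ₀ μ₁ : ℝ) (hγ : γ ∈ Set.Ioc (0 : ℝ) 1) (hμ₁ : 0 < μ₁) (hμ₁₀ : μ₁ ≤ μ₀)
    -- the central path on `[μ₁, μ₀]`
    (x s : ℝ → EuclideanSpace ℝ (Fin n))
    (hcp : ∀ μ ∈ Set.Icc μ₁ μ₀,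
      x μ - d ∈ W ∧ s μ - c ∈ Wᗮ ∧
      (∀ i, 0 < x μ i) ∧ (∀ i, 0 < s μ i) ∧ (∀ i, x μ i * s μ i = μ))
    -- the segment is `γ`-polarized with partition `B ∪ N = [n]`, `N = Bᶜ`
    (B : Finset (Fin n))
    (hpol : ∀ μ ∈ Set.Icc μ₁ μ₀,
      (∀ i ∈ B, γ * x μ₀ i ≤ x μ i) ∧ (∀ i ∉ B, γ * s μ₀ i ≤ s μ i)) :
    ∀ μ ∈ Set.Icc μ₁ μ₀,
      (∀ i ∈ B, γ * x μ₀ i ≤ x μ i ∧ x μ i ≤ n * x μ₀ i) ∧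
      (∀ i ∉ B, γ * s μ₀ i ≤ s μ i ∧ s μ i ≤ n * s μ₀ i) ∧
      (∀ i ∉ B, (μ / (n * μ₀)) * x μ₀ i ≤ x μ i ∧ x μ i ≤ (μ / (γ * μ₀)) * x μ₀ i) ∧
      (∀ i ∈ B, (μ / (n * μ₀)) * s μ₀ i ≤ s μ i ∧ s μ i ≤ (μ / (γ * μ₀)) * s μ₀ i) :=
  statement16_general n W d c γ μ₀ μ₁ hγ hμ₁ x s hcp B hpol
end

section
/- Let M : ℝⁿ → ℝᵐ be a linear map and T ⊆ ker M a linear subspace. Then for every i with 1 ≤ i ≤ n − dim T, the i-th largest singular value of M satisfies σ_i(M) = min{ max{‖Mu‖/‖u‖ : u ∈ S, u ≠ 0} : S a subspace of ℝⁿ with S orthogonal to T and dim S + dim T = n − i + 1 }; that is, in the Courant–Fischer minimum over all subspaces of dimension n − i + 1, one may instead minimize over subspaces orthogonal to T of dimension n − i + 1 − dim T. -/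
/-!
Write `λ₁ ≥ ⋯ ≥ λₙ` for the eigenvalues of `M†M`, with orthonormal eigenvectors `vₖ`. Every
subspace of dimension `n - i + 1` meets `span {v₁, …, vᵢ}`, on which `‖M u‖ ≥ √λᵢ ‖u‖`, while on
`W = span {vᵢ, …, vₙ}` we have `‖M u‖ ≤ √λᵢ ‖u‖`; so `W` attains the Courant–Fischer minimum.
Since `M` vanishes on `T`, for `S ⟂ T` the subspace `S ⊔ T` has dimension `dim S + dim T` and the
same maximal ratio `‖M u‖ / ‖u‖` as `S` (Pythagoras only enlarges `‖u‖`), which bounds the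
constrained minimum from below; and `W ⊓ Tᗮ`, of dimension at least `dim W - dim T`, contains a
subspace of the required dimension whose ratio is at most that of `W`.
-/

open scoped RealInnerProductSpace

/-- The `k`-th largest singular value of a linear map between finite-dimensional
normed spaces, via the Courant–Fischer characterization
`σ_k(M) = min { max {‖Mu‖/‖u‖ : u ∈ S, u ≠ 0} : dim S = q - k + 1 }`,
with the convention that it is `0` when `k` exceeds the dimension `q` of the domain. -/
noncomputable def singularValue {E F : Type*} [NormedAddCommGroup E] [NormedAddCommGroup F]
    [Module ℝ E] [Module ℝ F] (M : E →ₗ[ℝ] F) (k : ℕ) : ℝ :=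
  if k ≤ Module.finrank ℝ E then
    sInf {t : ℝ | ∃ S : Submodule ℝ E,
      Module.finrank ℝ S = Module.finrank ℝ E - k + 1 ∧
      t = sSup {r : ℝ | ∃ u ∈ S, u ≠ 0 ∧ r = ‖M u‖ / ‖u‖}}
  else 0

open Module Submodule

noncomputable def supNormRatio {E F : Type*} [NormedAddCommGroup E] [NormedAddCommGroup F]
    [Module ℝ E] [Module ℝ F] (M : E →ₗ[ℝ] F) (S : Submodule ℝ E) : ℝ :=
  sSup {r : ℝ | ∃ u ∈ S, u ≠ 0 ∧ r = ‖M u‖ / ‖u‖}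

theorem singularValue_eq_supNormRatio {E F : Type*} [NormedAddCommGroup E]
    [NormedAddCommGroup F] [Module ℝ E] [Module ℝ F] {M : E →ₗ[ℝ] F} {k : ℕ}
    (hk : k ≤ finrank ℝ E) {W : Submodule ℝ E} (hW : finrank ℝ W = finrank ℝ E - k + 1)
    (hmin : ∀ S : Submodule ℝ E, finrank ℝ S = finrank ℝ E - k + 1 →
      supNormRatio M W ≤ supNormRatio M S) :
    singularValue M k = supNormRatio M W := by
  rw [singularValue, if_pos hk]
  exact IsLeast.csInf_eq ⟨⟨W, hW, rfl⟩, by rintro _ ⟨S, hS, rfl⟩; exact hmin S hS⟩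

section NormedSpace

variable {E F : Type*} [NormedAddCommGroup E] [NormedSpace ℝ E]
  [NormedAddCommGroup F] [NormedSpace ℝ F] (M : E →ₗ[ℝ] F) {S S' : Submodule ℝ E}

theorem supNormRatio_nonneg (S : Submodule ℝ E) : 0 ≤ supNormRatio M S :=
  Real.sSup_nonneg <| by rintro _ ⟨u, -, -, rfl⟩; positivity

theorem supNormRatio_le {c : ℝ} (hc : 0 ≤ c) (h : ∀ u ∈ S, ‖M u‖ ≤ c * ‖u‖) :
    supNormRatio M S ≤ c :=
  Real.sSup_le (by rintro _ ⟨u, hu, hu0, rfl⟩; exact div_le_of_le_mul₀ (norm_nonneg u) hc (h u hu))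
    hc

theorem norm_apply_le_supNormRatio_mul [FiniteDimensional ℝ E] {u : E} (hu : u ∈ S) :
    ‖M u‖ ≤ supNormRatio M S * ‖u‖ := by
  rcases eq_or_ne u 0 with rfl | hu0
  · simp
  have hbdd : BddAbove {r : ℝ | ∃ u ∈ S, u ≠ 0 ∧ r = ‖M u‖ / ‖u‖} := by
    refine ⟨‖LinearMap.toContinuousLinearMap M‖, ?_⟩
    rintro _ ⟨w, -, hw0, rfl⟩
    exact div_le_of_le_mul₀ (norm_nonneg w) (norm_nonneg _)
      ((LinearMap.toContinuousLinearMap M).le_opNorm w)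
  exact (div_le_iff₀ (norm_pos_iff.mpr hu0)).mp (le_csSup hbdd ⟨u, hu, hu0, rfl⟩)

theorem supNormRatio_mono [FiniteDimensional ℝ E] (h : S ≤ S') :
    supNormRatio M S ≤ supNormRatio M S' :=
  supNormRatio_le M (supNormRatio_nonneg M S') fun _ hu ↦
    norm_apply_le_supNormRatio_mul M (h hu)

end NormedSpace

section InnerProductSpace

variable {E F : Type*} [NormedAddCommGroup E] [InnerProductSpace ℝ E] [FiniteDimensional ℝ E]
  [NormedAddCommGroup F] [NormedSpace ℝ F] {M : E →ₗ[ℝ] F}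

theorem supNormRatio_sup_of_le_ker {S T : Submodule ℝ E} (hT : T ≤ LinearMap.ker M)
    (hS : S ≤ Tᗮ) : supNormRatio M (S ⊔ T) = supNormRatio M S := by
  refine le_antisymm (supNormRatio_le M (supNormRatio_nonneg M S) fun u hu ↦ ?_)
    (supNormRatio_mono M le_sup_left)
  obtain ⟨a, ha, b, hb, rfl⟩ := Submodule.mem_sup.mp hu
  have hMb : M b = 0 := hT hb
  have hab : ‖a‖ ≤ ‖a + b‖ := by
    have hinner : ⟪a, b⟫ = 0 := Submodule.inner_left_of_mem_orthogonal hb (hS ha)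
    nlinarith [norm_add_sq_real a b, norm_nonneg a, norm_nonneg (a + b), sq_nonneg ‖b‖]
  calc ‖M (a + b)‖ = ‖M a‖ := by rw [map_add, hMb, add_zero]
    _ ≤ supNormRatio M S * ‖a‖ := norm_apply_le_supNormRatio_mul M ha
    _ ≤ supNormRatio M S * ‖a + b‖ := mul_le_mul_of_nonneg_left hab (supNormRatio_nonneg M S)

end InnerProductSpace

theorem Submodule.exists_le_finrank_eq {K V : Type*} [DivisionRing K] [AddCommGroup V] [Module K V]
    (W : Submodule K V) [FiniteDimensional K W] {d : ℕ} (hd : d ≤ finrank K W) :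
    ∃ S ≤ W, finrank K S = d := by
  let b := finBasis K W
  let w : Fin d → V := fun j ↦ b (Fin.castLE hd j)
  have hw : LinearIndependent K w :=
    (b.linearIndependent.comp _ (Fin.castLE_injective hd)).map' W.subtype W.ker_subtype
  refine ⟨span K (Set.range w), span_le.mpr ?_, by rw [finrank_span_eq_card hw, Fintype.card_fin]⟩
  rintro _ ⟨j, rfl⟩
  exact (b (Fin.castLE hd j)).2

theorem Submodule.inf_ne_bot_of_finrank_lt_add {K V : Type*} [DivisionRing K] [AddCommGroup V]
    [Module K V] [FiniteDimensional K V] {U W : Submodule K V}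
    (h : finrank K V < finrank K U + finrank K W) : U ⊓ W ≠ ⊥ := by
  intro hbot
  have := finrank_sup_add_finrank_inf_eq U W
  rw [hbot, finrank_bot] at this
  have := (U ⊔ W).finrank_le
  omega

section Orthogonal

variable {𝕜 E : Type*} [RCLike 𝕜] [NormedAddCommGroup E] [InnerProductSpace 𝕜 E]
  [FiniteDimensional 𝕜 E]

theorem Submodule.finrank_sup_eq_add_of_le_orthogonal {S T : Submodule 𝕜 E} (h : S ≤ Tᗮ) :
    finrank 𝕜 ↥(S ⊔ T) = finrank 𝕜 S + finrank 𝕜 T := by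
  have := finrank_sup_add_finrank_inf_eq S T
  rw [disjoint_iff.mp (isOrtho_iff_le.mpr h).disjoint, finrank_bot] at this
  omega

theorem Submodule.finrank_le_finrank_inf_orthogonal_add (W T : Submodule 𝕜 E) :
    finrank 𝕜 W ≤ finrank 𝕜 ↥(W ⊓ Tᗮ) + finrank 𝕜 T := by
  have := finrank_sup_add_finrank_inf_eq W Tᗮ
  have := T.finrank_add_finrank_orthogonal
  have := (W ⊔ Tᗮ).finrank_le
  omega

end Orthogonal

namespace OrthonormalBasis

variable {ι 𝕜 E : Type*} [Fintype ι] [RCLike 𝕜] [NormedAddCommGroup E] [InnerProductSpace 𝕜 E]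
  (v : OrthonormalBasis ι 𝕜 E)

theorem finrank_span_image (s : Finset ι) : finrank 𝕜 (span 𝕜 (v '' s)) = s.card := by
  rw [Set.image_eq_range, finrank_span_eq_card (b := fun k : (s : Set ι) ↦ v k)
    (v.orthonormal.linearIndependent.comp _ Subtype.val_injective)]
  simp only [SetLike.coe_sort_coe, Fintype.card_coe]

theorem repr_apply_eq_zero_of_mem_span_image {s : Set ι} {u : E} (hu : u ∈ span 𝕜 (v '' s))
    {k : ι} (hk : k ∉ s) : v.repr u k = 0 := by
  rw [← v.coe_toBasis, v.toBasis.mem_span_image] at hu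
  rw [← v.coe_toBasis_repr_apply]
  exact Finsupp.notMem_support_iff.mp fun h ↦ hk (hu h)

end OrthonormalBasis

section Gram

variable {E F : Type*} [NormedAddCommGroup E] [InnerProductSpace ℝ E] [FiniteDimensional ℝ E]
  [NormedAddCommGroup F] [InnerProductSpace ℝ F] [FiniteDimensional ℝ F] (M : E →ₗ[ℝ] F)

noncomputable def gramEigenbasis : OrthonormalBasis (Fin (finrank ℝ E)) ℝ E :=
  M.isPositive_adjoint_comp_self.isSymmetric.eigenvectorBasis rfl

noncomputable def gramEigenvalues : Fin (finrank ℝ E) → ℝ :=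
  M.isPositive_adjoint_comp_self.isSymmetric.eigenvalues rfl

theorem gramEigenvalues_antitone : Antitone (gramEigenvalues M) :=
  M.isPositive_adjoint_comp_self.isSymmetric.eigenvalues_antitone rfl

theorem gramEigenvalues_nonneg (k : Fin (finrank ℝ E)) : 0 ≤ gramEigenvalues M k :=
  M.isPositive_adjoint_comp_self.nonneg_eigenvalues rfl k

theorem norm_sq_eq_sum_gramEigenbasis (x : E) :
    ‖x‖ ^ 2 = ∑ k, (gramEigenbasis M).repr x k ^ 2 := by
  rw [← (gramEigenbasis M).repr.norm_map, EuclideanSpace.norm_sq_eq]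
  simp only [Real.norm_eq_abs, sq_abs]

theorem norm_apply_sq_eq_sum_gramEigenvalues (x : E) :
    ‖M x‖ ^ 2 = ∑ k, gramEigenvalues M k * (gramEigenbasis M).repr x k ^ 2 := by
  rw [← real_inner_self_eq_norm_sq, ← LinearMap.adjoint_inner_left,
    ← (gramEigenbasis M).repr.inner_map_map, PiLp.inner_apply]
  refine Finset.sum_congr rfl fun k _ ↦ ?_
  have := M.isPositive_adjoint_comp_self.isSymmetric.eigenvectorBasis_apply_self_apply rfl x k
  rw [LinearMap.comp_apply] at this
  rw [gramEigenbasis, this, gramEigenvalues, RCLike.inner_apply, conj_trivial,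
    RCLike.ofReal_real_eq_id, id]
  ring

variable {M}

theorem norm_apply_le_of_mem_span_gramEigenbasis {s : Set (Fin (finrank ℝ E))} {c : ℝ}
    (hc : 0 ≤ c) (hs : ∀ k ∈ s, gramEigenvalues M k ≤ c ^ 2) {u : E}
    (hu : u ∈ span ℝ (gramEigenbasis M '' s)) : ‖M u‖ ≤ c * ‖u‖ := by
  refine (pow_le_pow_iff_left₀ (norm_nonneg _) (by positivity) two_ne_zero).mp ?_
  rw [mul_pow, norm_apply_sq_eq_sum_gramEigenvalues, norm_sq_eq_sum_gramEigenbasis M,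
    Finset.mul_sum]
  refine Finset.sum_le_sum fun k _ ↦ ?_
  by_cases hk : k ∈ s
  · exact mul_le_mul_of_nonneg_right (hs k hk) (sq_nonneg _)
  · simp [(gramEigenbasis M).repr_apply_eq_zero_of_mem_span_image hu hk]

theorem le_norm_apply_of_mem_span_gramEigenbasis {s : Set (Fin (finrank ℝ E))} {c : ℝ}
    (hc : 0 ≤ c) (hs : ∀ k ∈ s, c ^ 2 ≤ gramEigenvalues M k) {u : E}
    (hu : u ∈ span ℝ (gramEigenbasis M '' s)) : c * ‖u‖ ≤ ‖M u‖ := by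
  refine (pow_le_pow_iff_left₀ (by positivity) (norm_nonneg _) two_ne_zero).mp ?_
  rw [mul_pow, norm_apply_sq_eq_sum_gramEigenvalues, norm_sq_eq_sum_gramEigenbasis M,
    Finset.mul_sum]
  refine Finset.sum_le_sum fun k _ ↦ ?_
  by_cases hk : k ∈ s
  · exact mul_le_mul_of_nonneg_right (hs k hk) (sq_nonneg _)
  · simp [(gramEigenbasis M).repr_apply_eq_zero_of_mem_span_image hu hk]

variable (M) in
theorem exists_finrank_eq_forall_supNormRatio_le {L : ℕ} (hL0 : 0 < L)
    (hL : L ≤ finrank ℝ E) : ∃ W : Submodule ℝ E, finrank ℝ W = L ∧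
      ∀ S : Submodule ℝ E, finrank ℝ S = L → supNormRatio M W ≤ supNormRatio M S := by
  -- `λⱼ` is the `L`-th smallest eigenvalue (indices start at `0`)
  let j : Fin (finrank ℝ E) := ⟨finrank ℝ E - L, by omega⟩
  let c := √(gramEigenvalues M j)
  have hc : c ^ 2 = gramEigenvalues M j := Real.sq_sqrt (gramEigenvalues_nonneg M j)
  refine ⟨span ℝ (gramEigenbasis M '' Finset.Ici j), ?_, fun S hS ↦ ?_⟩
  · rw [OrthonormalBasis.finrank_span_image, Fin.card_Ici]
    dsimp only [j]
    omega
  have hU : finrank ℝ (span ℝ (gramEigenbasis M '' Finset.Iic j)) = finrank ℝ E - L + 1 := by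
    rw [OrthonormalBasis.finrank_span_image, Fin.card_Iic]
  obtain ⟨u, ⟨huS, huU⟩, hu0⟩ :=
    exists_mem_ne_zero_of_ne_bot (inf_ne_bot_of_finrank_lt_add (by omega : finrank ℝ E <
      finrank ℝ S + finrank ℝ (span ℝ (gramEigenbasis M '' Finset.Iic j))))
  calc supNormRatio M _ ≤ c := supNormRatio_le M (Real.sqrt_nonneg _) fun w hw ↦
        norm_apply_le_of_mem_span_gramEigenbasis (Real.sqrt_nonneg _) (fun k hk ↦ by
          rw [hc]; exact gramEigenvalues_antitone M (Finset.mem_Ici.mp hk)) hw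
    _ ≤ supNormRatio M S := by
      refine le_of_mul_le_mul_right ?_ (norm_pos_iff.mpr hu0)
      calc c * ‖u‖ ≤ ‖M u‖ := le_norm_apply_of_mem_span_gramEigenbasis (Real.sqrt_nonneg _)
            (fun k hk ↦ by rw [hc]; exact gramEigenvalues_antitone M (Finset.mem_Iic.mp hk)) huU
        _ ≤ supNormRatio M S * ‖u‖ := norm_apply_le_supNormRatio_mul M huS

end Gram

theorem statement18 (n m : ℕ)
    (M : EuclideanSpace ℝ (Fin n) →ₗ[ℝ] EuclideanSpace ℝ (Fin m))
    (T : Submodule ℝ (EuclideanSpace ℝ (Fin n))) (hT : T ≤ LinearMap.ker M)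
    (i : ℕ) (hi1 : 1 ≤ i) (hi2 : i ≤ n - Module.finrank ℝ T) :
    IsLeast {t : ℝ | ∃ S : Submodule ℝ (EuclideanSpace ℝ (Fin n)),
        S ≤ Tᗮ ∧ Module.finrank ℝ S + Module.finrank ℝ T = n - i + 1 ∧
        t = sSup {r : ℝ | ∃ u ∈ S, u ≠ 0 ∧ r = ‖M u‖ / ‖u‖}}
      (singularValue M i) := by
  have hn : finrank ℝ (EuclideanSpace ℝ (Fin n)) = n := finrank_euclideanSpace_fin
  have hTn := T.finrank_le
  obtain ⟨W, hW, hWmin⟩ :=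
    exists_finrank_eq_forall_supNormRatio_le M (L := n - i + 1) (by omega) (by omega)
  have hσ : singularValue M i = supNormRatio M W :=
    singularValue_eq_supNormRatio (by omega) (by omega) fun S hS ↦ hWmin S (by omega)
  have hWle : ∀ S ≤ Tᗮ, finrank ℝ S + finrank ℝ T = n - i + 1 →
      supNormRatio M W ≤ supNormRatio M S := fun S hS hSdim ↦ by
    rw [← supNormRatio_sup_of_le_ker hT hS]
    exact hWmin _ (by rw [finrank_sup_eq_add_of_le_orthogonal hS, hSdim])
  obtain ⟨S, hSW, hSdim⟩ := (W ⊓ Tᗮ).exists_le_finrank_eq (d := n - i + 1 - finrank ℝ T)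
    (by have := W.finrank_le_finrank_inf_orthogonal_add T; omega)
  have hSdim' : finrank ℝ S + finrank ℝ T = n - i + 1 := by omega
  rw [hσ]
  refine ⟨⟨S, hSW.trans inf_le_right, hSdim', le_antisymm (hWle S (hSW.trans inf_le_right) hSdim')
    (supNormRatio_mono M (hSW.trans inf_le_left))⟩, ?_⟩
  rintro _ ⟨S', hS', hS'dim, rfl⟩
  exact hWle S' hS' hS'dim
end
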